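/- Let $\rho, \hat{\rho}, \kappa$ be density matrices on $\mathbb{C}^{d}$ with $\mathrm{Tr}(|\hat{\rho} - \rho|) \le 2\delta$. Then the fidelities $F(\rho, \kappa) = \|\sqrt{\rho}\sqrt{\kappa}\|_1$ and $F(\hat{\rho}, \kappa) = \|\sqrt{\hat{\rho}}\sqrt{\kappa}\|_1$ satisfy $|F(\hat{\rho}, \kappa) - F(\rho, \kappa)| \le \sqrt{2\delta}$, i.e., $F(\hat{\rho},\kappa) - \sqrt{2\delta} \le F(\rho,\kappa) \le F(\hat{\rho},\kappa) + \sqrt{2\delta}$. -/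

import Mathlib

open Matrix ComplexOrder

/-- Port: `Matrix.PosSemidef.sqrt` as it was defined in Mathlib (Dec 2024). -/
noncomputable def Matrix.PosSemidef.sqrt {n 𝕜 : Type*} [Fintype n] [DecidableEq n] [RCLike 𝕜]
    {A : Matrix n n 𝕜} (hA : A.PosSemidef) : Matrix n n 𝕜 :=
  hA.1.eigenvectorUnitary.1 * diagonal ((↑) ∘ (fun x : ℝ => Real.sqrt x) ∘ hA.1.eigenvalues) *
    (star hA.1.eigenvectorUnitary : Matrix n n 𝕜)

/-- The trace norm `‖X‖₁ = Tr √(Xᴴ X)` (a real number). -/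
noncomputable def traceNorm {d : ℕ} (X : Matrix (Fin d) (Fin d) ℂ) : ℝ :=
  ((Matrix.posSemidef_conjTranspose_mul_self X).sqrt.trace).re

/-- The fidelity `F(A,B) = ‖√A √B‖₁`. -/
noncomputable def fid {d : ℕ} {A B : Matrix (Fin d) (Fin d) ℂ}
    (hA : A.PosSemidef) (hB : B.PosSemidef) : ℝ :=
  traceNorm (hA.sqrt * hB.sqrt)


/-!
Pick a unitary `W` with `F(A,C) = Re Tr(W √A √C)` (polar decomposition). Since
`F(B,C) ≥ Re Tr(W √B √C)` for every unitary `W`, Cauchy–Schwarz for the Frobenius inner product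
gives `F(A,C) - F(B,C) ≤ ‖√A - √B‖₂ ‖√C‖₂`, and `‖√C‖₂² = Tr C = 1`.

The Powers–Størmer inequality `‖√A - √B‖₂² ≤ ‖A - B‖₁` finishes the proof. With `S = √A - √B`
and `V` the unitary sign of `S`, the identity `A - B = √A S + S √B` gives
`Tr((A - B) V) = Tr(√A |S|) + Tr(√B |S|)`, and this dominates `Tr(√A S) - Tr(√B S) = Tr S²`
because `|S| - S` and `|S| + S` are positive semidefinite.
-/

open scoped MatrixOrder

attribute [local instance] Matrix.frobeniusNormedAddCommGroup

section OrthogonalFamily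

variable {ι 𝕜 E : Type*} [Fintype ι] [RCLike 𝕜] [NormedAddCommGroup E] [InnerProductSpace 𝕜 E]
  [FiniteDimensional 𝕜 E]

theorem exists_orthonormalBasis_eq_norm_smul (card_ι : Module.finrank 𝕜 E = Fintype.card ι)
    {v : ι → E} (hv : Pairwise fun i j => inner 𝕜 (v i) (v j) = 0) :
    ∃ c : OrthonormalBasis ι 𝕜 E, ∀ i, v i = (‖v i‖ : 𝕜) • c i := by
  let s : Set ι := {i | v i ≠ 0}
  have hs : Orthonormal 𝕜 (s.domRestrict fun i => (‖v i‖⁻¹ : 𝕜) • v i) := by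
    refine ⟨fun ⟨i, hi⟩ => norm_smul_inv_norm hi, fun i j hij => ?_⟩
    simp only [Set.domRestrict_apply, inner_smul_left, inner_smul_right,
      hv (Subtype.coe_ne_coe.mpr hij), mul_zero]
  obtain ⟨c, hc⟩ := hs.exists_orthonormalBasis_extension_of_card_eq card_ι
  refine ⟨c, fun i => ?_⟩
  by_cases hi : v i = 0
  · simp [hi]
  · rw [hc i hi, smul_smul, mul_inv_cancel₀ (by simpa using hi), one_smul]

end OrthogonalFamily

namespace Matrix

section Frobenius

variable {m n 𝕜 : Type*} [Fintype m] [Fintype n] [RCLike 𝕜]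

lemma frobenius_inner_eq_trace (X Y : Matrix m n 𝕜) :
    inner 𝕜 (WithLp.toLp 2 fun i => WithLp.toLp 2 (X i) : PiLp 2 fun _ : m => EuclideanSpace 𝕜 n)
      (WithLp.toLp 2 fun i => WithLp.toLp 2 (Y i)) = (Xᴴ * Y).trace := by
  simp only [PiLp.inner_apply, RCLike.inner_apply, trace, diag_apply, mul_apply,
    conjTranspose_apply]
  rw [Finset.sum_comm]
  simp [mul_comm]

lemma frobenius_norm_sq_eq_re_trace (X : Matrix m n 𝕜) :
    ‖X‖ ^ 2 = RCLike.re (Xᴴ * X).trace := by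
  rw [← frobenius_inner_eq_trace, inner_self_eq_norm_sq]
  rfl

lemma re_trace_conjTranspose_mul_le (X Y : Matrix m n 𝕜) :
    RCLike.re (Xᴴ * Y).trace ≤ ‖X‖ * ‖Y‖ := by
  rw [← frobenius_inner_eq_trace]
  exact re_inner_le_norm _ _

lemma frobenius_norm_mul_of_mem_unitaryGroup [DecidableEq m] {W : Matrix m m 𝕜}
    (hW : W ∈ unitaryGroup m 𝕜) (X : Matrix m n 𝕜) : ‖W * X‖ = ‖X‖ := by
  refine (pow_left_inj₀ (norm_nonneg _) (norm_nonneg _) two_ne_zero).mp ?_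
  rw [frobenius_norm_sq_eq_re_trace, frobenius_norm_sq_eq_re_trace, conjTranspose_mul,
    Matrix.mul_assoc, ← Matrix.mul_assoc Wᴴ, ← star_eq_conjTranspose, mem_unitaryGroup_iff'.mp hW,
    Matrix.one_mul]

end Frobenius

namespace PosSemidef

variable {n 𝕜 : Type*} [Fintype n] [DecidableEq n] [RCLike 𝕜] {A B : Matrix n n 𝕜}

lemma sqrt_eq_cfcSqrt (hA : A.PosSemidef) : hA.sqrt = CFC.sqrt A := by
  rw [CFC.sqrt_eq_real_sqrt A hA.nonneg, cfcₙ_eq_cfc, hA.1.cfc_eq]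
  rfl

lemma sqrt_mul_self (hA : A.PosSemidef) : hA.sqrt * hA.sqrt = A := by
  rw [sqrt_eq_cfcSqrt, CFC.sqrt_mul_sqrt_self A hA.nonneg]

lemma posSemidef_sqrt (hA : A.PosSemidef) : hA.sqrt.PosSemidef := by
  rw [sqrt_eq_cfcSqrt, ← nonneg_iff_posSemidef]
  exact CFC.sqrt_nonneg A

lemma frobenius_norm_sqrt_sq (hA : A.PosSemidef) : ‖hA.sqrt‖ ^ 2 = RCLike.re A.trace := by
  rw [frobenius_norm_sq_eq_re_trace, hA.posSemidef_sqrt.1.eq, sqrt_mul_self]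

lemma trace_mul_nonneg (hA : A.PosSemidef) (hB : B.PosSemidef) : 0 ≤ (A * B).trace := by
  have h := (hB.mul_mul_conjTranspose_same hA.sqrt).trace_nonneg
  rwa [hA.posSemidef_sqrt.1.eq, trace_mul_comm, ← mul_assoc, hA.sqrt_mul_self] at h

lemma re_trace_mul_nonneg (hA : A.PosSemidef) (hB : B.PosSemidef) :
    0 ≤ RCLike.re (A * B).trace :=
  (RCLike.nonneg_iff.mp (hA.trace_mul_nonneg hB)).1

end PosSemidef

section Polar

variable {m n 𝕜 : Type*} [Fintype m] [Fintype n] [RCLike 𝕜]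

lemma inner_toLp_mulVec_toLp_mulVec (X : Matrix m n 𝕜) (x y : n → 𝕜) :
    inner 𝕜 (WithLp.toLp 2 (X *ᵥ x) : EuclideanSpace 𝕜 m) (WithLp.toLp 2 (X *ᵥ y)) =
      inner 𝕜 (WithLp.toLp 2 x : EuclideanSpace 𝕜 n) (WithLp.toLp 2 ((Xᴴ * X) *ᵥ y)) := by
  simp only [EuclideanSpace.inner_toLp_toLp, star_mulVec, ← mulVec_mulVec]
  rw [dotProduct_comm, ← dotProduct_mulVec, dotProduct_comm]

theorem exists_mem_unitaryGroup_eq_mul_sqrt [DecidableEq n] (X : Matrix n n 𝕜) :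
    ∃ W ∈ unitaryGroup n 𝕜, X = W * (posSemidef_conjTranspose_mul_self X).sqrt := by
  set hH := (posSemidef_conjTranspose_mul_self X).1
  set b := hH.eigenvectorBasis
  set U : Matrix n n 𝕜 := (hH.eigenvectorUnitary : Matrix n n 𝕜)
  set D : Matrix n n 𝕜 := diagonal ((↑) ∘ (fun x : ℝ => Real.sqrt x) ∘ hH.eigenvalues)
  let v : n → EuclideanSpace 𝕜 n := fun j => WithLp.toLp 2 (X *ᵥ b j)
  have hv_inner (i j : n) : inner 𝕜 (v i) (v j) = hH.eigenvalues j * inner 𝕜 (b i) (b j) := by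
    rw [inner_toLp_mulVec_toLp_mulVec, hH.mulVec_eigenvectorBasis,
      RCLike.real_smul_eq_coe_smul (K := 𝕜), WithLp.toLp_smul, inner_smul_right]
  have hv_norm (j : n) : ‖v j‖ = √(hH.eigenvalues j) := by
    rw [← Real.sqrt_sq (norm_nonneg _), ← inner_self_eq_norm_sq (𝕜 := 𝕜), hv_inner,
      orthonormal_iff_ite.mp b.orthonormal, if_pos rfl, mul_one, RCLike.ofReal_re]
  obtain ⟨c, hc⟩ := exists_orthonormalBasis_eq_norm_smul (finrank_euclideanSpace (𝕜 := 𝕜))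
    (v := v) fun i j hij => by
      simp only [hv_inner, orthonormal_iff_ite.mp b.orthonormal, if_neg hij, mul_zero]
  set C : Matrix n n 𝕜 := (EuclideanSpace.basisFun n 𝕜).toBasis.toMatrix c.toBasis
  have hC : C ∈ unitaryGroup n 𝕜 :=
    (EuclideanSpace.basisFun n 𝕜).toMatrix_orthonormalBasis_mem_unitary c
  have hXU : X * U = C * D := ext_of_mulVec_single fun j => by
    have hvj : X *ᵥ b j = (√(hH.eigenvalues j) : 𝕜) • ⇑(c j) := by
      rw [← hv_norm]; exact congrArg WithLp.ofLp (hc j)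
    rw [← mulVec_mulVec, ← mulVec_mulVec, hH.eigenvectorUnitary_mulVec, hvj,
      diagonal_mulVec_single]
    ext i
    simp [mulVec_single, C, Module.Basis.toMatrix_apply, mul_comm]
  refine ⟨C * star U, mul_mem hC (Unitary.star_mem hH.eigenvectorUnitary.2), ?_⟩
  have hU : U * star U = 1 := Unitary.coe_mul_star_self _
  have hU' : star U * U = 1 := Unitary.coe_star_mul_self _
  calc X = X * U * star U := by rw [mul_assoc, hU, mul_one]
    _ = C * star U * (U * D * star U) := by
      rw [hXU]; simp only [mul_assoc]; rw [← mul_assoc (star U) U, hU', one_mul]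

end Polar

variable {n 𝕜 : Type*} [Fintype n] [DecidableEq n] [RCLike 𝕜]

lemma re_trace_mul_le_re_trace_of_mem_unitaryGroup {W P : Matrix n n 𝕜}
    (hW : W ∈ unitaryGroup n 𝕜) (hP : P.PosSemidef) :
    RCLike.re (W * P).trace ≤ RCLike.re P.trace := by
  set S := hP.sqrt
  have hS : Sᴴ = S := hP.posSemidef_sqrt.1.eq
  calc RCLike.re (W * P).trace = RCLike.re (Sᴴ * (W * S)).trace := by
        rw [hS, ← hP.sqrt_mul_self, ← mul_assoc, trace_mul_comm (W * S)]
    _ ≤ ‖S‖ * ‖W * S‖ := re_trace_conjTranspose_mul_le _ _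
    _ = RCLike.re P.trace := by
        rw [frobenius_norm_mul_of_mem_unitaryGroup hW, ← sq, hP.frobenius_norm_sqrt_sq]

lemma IsHermitian.exists_mem_unitaryGroup_mul_eq_abs {S : Matrix n n 𝕜} (hS : S.IsHermitian) :
    ∃ V ∈ unitaryGroup n 𝕜, S * V = CFC.abs S ∧ V * S = CFC.abs S := by
  have hcont (f : ℝ → ℝ) : ContinuousOn f (spectrum ℝ S) := (Set.toFinite _).continuousOn f
  -- `sgn 0 = 1`, unlike `Real.sign`, so that `cfc sgn S` is unitary even when `S` is singular.
  set sgn : ℝ → ℝ := fun x => if 0 ≤ x then 1 else -1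
  have habs : CFC.abs S = cfc (fun x => x * sgn x) S := by
    rw [CFC.abs_eq_cfcₙ_norm S, cfcₙ_eq_cfc]
    refine cfc_congr fun x _ => ?_
    by_cases hx : 0 ≤ x
    · simp [sgn, hx, abs_of_nonneg]
    · simp [sgn, hx, abs_of_neg (not_le.mp hx)]
  refine ⟨cfc sgn S, ?_, ?_, ?_⟩
  · rw [mem_unitaryGroup_iff, (cfc_predicate sgn S : IsSelfAdjoint (cfc sgn S)).star_eq,
      ← cfc_mul sgn sgn S (hcont _) (hcont _), ← cfc_one ℝ S]
    exact cfc_congr fun x _ => by by_cases hx : 0 ≤ x <;> simp [sgn, hx]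
  · nth_rw 1 [← cfc_id' ℝ S]
    rw [← cfc_mul _ sgn S (hcont _) (hcont _), habs]
  · nth_rw 2 [← cfc_id' ℝ S]
    rw [← cfc_mul sgn _ S (hcont _) (hcont _), habs]
    exact cfc_congr fun x _ => mul_comm _ _

theorem exists_mem_unitaryGroup_frobenius_norm_sqrt_sub_sqrt_sq_le {A B : Matrix n n 𝕜}
    (hA : A.PosSemidef) (hB : B.PosSemidef) :
    ∃ V ∈ unitaryGroup n 𝕜, ‖hA.sqrt - hB.sqrt‖ ^ 2 ≤ RCLike.re ((A - B) * V).trace := by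
  set S := hA.sqrt - hB.sqrt with hSdef
  have hS : S.IsHermitian := hA.posSemidef_sqrt.1.sub hB.posSemidef_sqrt.1
  obtain ⟨V, hV, hSV, hVS⟩ := hS.exists_mem_unitaryGroup_mul_eq_abs
  have habs_sub : (CFC.abs S - S).PosSemidef := by
    rw [← nonneg_iff_posSemidef, CFC.abs_sub_self S]
    exact nsmul_nonneg (CFC.negPart_nonneg S) 2
  have habs_add : (CFC.abs S + S).PosSemidef := by
    rw [← nonneg_iff_posSemidef, CFC.abs_add_self S]
    exact nsmul_nonneg (CFC.posPart_nonneg S) 2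
  have hsq : ‖S‖ ^ 2 = RCLike.re (hA.sqrt * S).trace - RCLike.re (hB.sqrt * S).trace := by
    rw [frobenius_norm_sq_eq_re_trace, hS.eq]
    nth_rw 1 [hSdef]
    rw [sub_mul, trace_sub, map_sub]
  have htrace :
      ((A - B) * V).trace = (hA.sqrt * CFC.abs S).trace + (hB.sqrt * CFC.abs S).trace := by
    have hdiff : A - B = hA.sqrt * S + S * hB.sqrt := by
      rw [hSdef, mul_sub, sub_mul, hA.sqrt_mul_self, hB.sqrt_mul_self, sub_add_sub_cancel]
    rw [hdiff, add_mul, trace_add, mul_assoc, hSV, mul_assoc, trace_mul_comm S, mul_assoc, hVS]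
  have hA' := hA.posSemidef_sqrt.re_trace_mul_nonneg habs_sub
  have hB' := hB.posSemidef_sqrt.re_trace_mul_nonneg habs_add
  rw [mul_sub, trace_sub, map_sub] at hA'
  rw [mul_add, trace_add, map_add] at hB'
  refine ⟨V, hV, ?_⟩
  rw [htrace, map_add, hsq]
  linarith

end Matrix

section TraceNorm

variable {d : ℕ}

lemma re_trace_mul_le_traceNorm {W : Matrix (Fin d) (Fin d) ℂ} (hW : W ∈ unitaryGroup (Fin d) ℂ)
    (X : Matrix (Fin d) (Fin d) ℂ) : (W * X).trace.re ≤ traceNorm X := by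
  obtain ⟨V, hV, hX⟩ := exists_mem_unitaryGroup_eq_mul_sqrt X
  nth_rw 1 [hX]
  rw [← mul_assoc]
  exact re_trace_mul_le_re_trace_of_mem_unitaryGroup (mul_mem hW hV)
    (PosSemidef.posSemidef_sqrt _)

lemma exists_mem_unitaryGroup_re_trace_mul_eq_traceNorm (X : Matrix (Fin d) (Fin d) ℂ) :
    ∃ W ∈ unitaryGroup (Fin d) ℂ, (W * X).trace.re = traceNorm X := by
  obtain ⟨V, hV, hX⟩ := exists_mem_unitaryGroup_eq_mul_sqrt X
  refine ⟨star V, Unitary.star_mem hV, ?_⟩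
  nth_rw 1 [hX]
  rw [← mul_assoc, mem_unitaryGroup_iff'.mp hV, one_mul]
  rfl

theorem frobenius_norm_sqrt_sub_sqrt_sq_le_traceNorm {A B : Matrix (Fin d) (Fin d) ℂ}
    (hA : A.PosSemidef) (hB : B.PosSemidef) : ‖hA.sqrt - hB.sqrt‖ ^ 2 ≤ traceNorm (A - B) := by
  obtain ⟨V, hV, h⟩ := exists_mem_unitaryGroup_frobenius_norm_sqrt_sub_sqrt_sq_le hA hB
  calc ‖hA.sqrt - hB.sqrt‖ ^ 2 ≤ ((A - B) * V).trace.re := h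
    _ = (V * (A - B)).trace.re := by rw [trace_mul_comm]
    _ ≤ traceNorm (A - B) := re_trace_mul_le_traceNorm hV _

lemma fid_sub_fid_le {A B C : Matrix (Fin d) (Fin d) ℂ}
    (hA : A.PosSemidef) (hB : B.PosSemidef) (hC : C.PosSemidef) :
    fid hA hC - fid hB hC ≤ ‖hA.sqrt - hB.sqrt‖ * ‖hC.sqrt‖ := by
  obtain ⟨W, hW, hWA⟩ := exists_mem_unitaryGroup_re_trace_mul_eq_traceNorm (hA.sqrt * hC.sqrt)
  have hWB := re_trace_mul_le_traceNorm hW (hB.sqrt * hC.sqrt)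
  have hsplit : (W * (hA.sqrt * hC.sqrt)).trace - (W * (hB.sqrt * hC.sqrt)).trace
      = ((star W * hC.sqrt)ᴴ * (hA.sqrt - hB.sqrt)).trace := by
    rw [← trace_sub, ← mul_sub, ← sub_mul, trace_mul_comm, conjTranspose_mul,
      hC.posSemidef_sqrt.1.eq, star_eq_conjTranspose, conjTranspose_conjTranspose, mul_assoc,
      trace_mul_comm]
  have hCS := re_trace_conjTranspose_mul_le (star W * hC.sqrt) (hA.sqrt - hB.sqrt)
  rw [← hsplit, frobenius_norm_mul_of_mem_unitaryGroup (Unitary.star_mem hW)] at hCS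
  simp only [fid, RCLike.re_to_complex, Complex.sub_re] at hCS ⊢
  linarith

lemma abs_fid_sub_fid_le {A B C : Matrix (Fin d) (Fin d) ℂ}
    (hA : A.PosSemidef) (hB : B.PosSemidef) (hC : C.PosSemidef) :
    |fid hA hC - fid hB hC| ≤ ‖hA.sqrt - hB.sqrt‖ * ‖hC.sqrt‖ := by
  refine abs_sub_le_iff.mpr ⟨fid_sub_fid_le hA hB hC, ?_⟩
  rw [norm_sub_rev]
  exact fid_sub_fid_le hB hA hC

end TraceNorm

theorem fidelity_perturbation_general (d : ℕ) (δ : ℝ)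
    (ρ ρhat κ : Matrix (Fin d) (Fin d) ℂ)
    (hρ : ρ.PosSemidef)
    (hρhat : ρhat.PosSemidef)
    (hκ : κ.PosSemidef) (hκtr : κ.trace = 1)
    (hdist : traceNorm (ρhat - ρ) ≤ 2 * δ) :
    |fid hρhat hκ - fid hρ hκ| ≤ Real.sqrt (2 * δ) ∧
    (fid hρhat hκ - Real.sqrt (2 * δ) ≤ fid hρ hκ ∧
      fid hρ hκ ≤ fid hρhat hκ + Real.sqrt (2 * δ)) := by
  have hκ_norm : ‖hκ.sqrt‖ = 1 := by
    have h := hκ.frobenius_norm_sqrt_sq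
    rw [hκtr, RCLike.one_re] at h
    exact (pow_eq_one_iff_of_nonneg (norm_nonneg _) two_ne_zero).mp h
  have hsqrt : ‖hρhat.sqrt - hρ.sqrt‖ ≤ Real.sqrt (2 * δ) :=
    Real.le_sqrt_of_sq_le ((frobenius_norm_sqrt_sub_sqrt_sq_le_traceNorm hρhat hρ).trans hdist)
  have habs : |fid hρhat hκ - fid hρ hκ| ≤ Real.sqrt (2 * δ) := by
    simpa [hκ_norm] using (abs_fid_sub_fid_le hρhat hρ hκ).trans
      (mul_le_mul_of_nonneg_right hsqrt (norm_nonneg _))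
  obtain ⟨hlower, hupper⟩ := abs_le.mp habs
  exact ⟨habs, by linarith, by linarith⟩

/-- If `ρ, ρ̂, κ` are density matrices with `Tr|ρ̂ - ρ| ≤ 2δ`, then
`|F(ρ̂,κ) - F(ρ,κ)| ≤ √(2δ)`, i.e. `F(ρ̂,κ) - √(2δ) ≤ F(ρ,κ) ≤ F(ρ̂,κ) + √(2δ)`. -/
theorem fidelity_perturbation (d : ℕ) (δ : ℝ)
    (ρ ρhat κ : Matrix (Fin d) (Fin d) ℂ)
    (hρ : ρ.PosSemidef) (hρtr : ρ.trace = 1)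
    (hρhat : ρhat.PosSemidef) (hρhattr : ρhat.trace = 1)
    (hκ : κ.PosSemidef) (hκtr : κ.trace = 1)
    (hdist : traceNorm (ρhat - ρ) ≤ 2 * δ) :
    |fid hρhat hκ - fid hρ hκ| ≤ Real.sqrt (2 * δ) ∧
    (fid hρhat hκ - Real.sqrt (2 * δ) ≤ fid hρ hκ ∧
      fid hρ hκ ≤ fid hρhat hκ + Real.sqrt (2 * δ)) :=
  fidelity_perturbation_general d δ ρ ρhat κ hρ hρhat hκ hκtr hdist
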